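/- For every integer q ≥ 2, the Diestel–Leader graph DL(q, q) is isomorphic as a graph to the Cayley graph of the lamplighter group (⊕_ℤ ℤ/qℤ) ⋊ ℤ with respect to the symmetric generating set S = {(b·δ₀, 1) : b ∈ ℤ/qℤ} ∪ {(b·δ₀, 1)⁻¹ : b ∈ ℤ/qℤ} of 2q elements, where δ₀ ∈ ⊕_ℤ ℤ/qℤ is the point mass at 0 (δ₀(0) = 1 and δ₀(m) = 0 for m ≠ 0). -/

import Mathlib

/-- The base group of the lamplighter group: finitely supported functions `ℤ → ℤ/qℤ`. -/
abbrev LampBase (q : ℕ) := ℤ →₀ ZMod q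

/-- The shift automorphism `(k • f)(m) = f(m - k)` of the base group. -/
noncomputable def lampShift (q : ℕ) (k : ℤ) : LampBase q ≃+ LampBase q :=
  Finsupp.domCongr (Equiv.addRight k)

lemma lampShift_apply (q : ℕ) (k : ℤ) (f : LampBase q) (m : ℤ) :
    lampShift q k f m = f (m - k) := by
  simp [lampShift, Finsupp.domCongr_apply, sub_eq_add_neg]

/-- The shift action of `ℤ` on the base group, as a monoid homomorphism
(written multiplicatively). -/
noncomputable def lampAct (q : ℕ) :
    Multiplicative ℤ →* MulAut (Multiplicative (LampBase q)) where
  toFun k := AddEquiv.toMultiplicative (lampShift q (Multiplicative.toAdd k))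
  map_one' := by
    ext f m
    show lampShift q (Multiplicative.toAdd (1 : Multiplicative ℤ)) (Multiplicative.toAdd f) m
      = Multiplicative.toAdd f m
    rw [lampShift_apply]
    norm_num
  map_mul' a b := by
    ext f m
    show lampShift q (Multiplicative.toAdd (a * b)) (Multiplicative.toAdd f) m
      = lampShift q (Multiplicative.toAdd a) (lampShift q (Multiplicative.toAdd b)
          (Multiplicative.toAdd f)) m
    rw [lampShift_apply, lampShift_apply, lampShift_apply]
    congr 1
    show m - (Multiplicative.toAdd a + Multiplicative.toAdd b) = _
    ring
  /-- The lamplighter group `ℤ_q ≀ ℤ = (⊕_ℤ ℤ/qℤ) ⋊ ℤ`. -/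
noncomputable abbrev Lamp (q : ℕ) :=
  SemidirectProduct (Multiplicative (LampBase q)) (Multiplicative ℤ) (lampAct q)


/-- A vertex of the homogeneous tree `T_q` with a fixed end: a pair `(f, n)` with
`f : ℤ → ℤ/qℤ` finitely supported and `f k = 0` for `k ≥ n`. -/
structure TreeVert (q : ℕ) where
  f : ℤ → ZMod q
  lvl : ℤ
  finsupp : {k : ℤ | f k ≠ 0}.Finite
  eventually_zero : ∀ k, lvl ≤ k → f k = 0

/-- Adjacency in the tree `T_q`. -/
def treeAdj (q : ℕ) (u v : TreeVert q) : Prop :=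
  (v.lvl = u.lvl + 1 ∧ ∀ k < u.lvl, u.f k = v.f k) ∨
  (u.lvl = v.lvl + 1 ∧ ∀ k < v.lvl, v.f k = u.f k)

/-- The homogeneous tree `T_q` with a fixed end, as a simple graph. -/
def treeGraph (q : ℕ) : SimpleGraph (TreeVert q) where
  Adj := treeAdj q
  symm := ⟨fun _ _ h => Or.symm h⟩
  loopless := by
    constructor
    rintro u (⟨h, _⟩ | ⟨h, _⟩) <;> omega

/-- Vertices of the Diestel-Leader graph `DL(q₁,…,q_d)`. -/
def DLVert (d : ℕ) (q : Fin d → ℕ) : Type :=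
  { x : (j : Fin d) → TreeVert (q j) // ∑ j, (x j).lvl = 0 }

/-- Adjacency in the Diestel-Leader graph. -/
def DLAdj (d : ℕ) (q : Fin d → ℕ) (x y : DLVert d q) : Prop :=
  ∃ i j : Fin d, i ≠ j ∧ treeAdj (q i) (x.1 i) (y.1 i) ∧ treeAdj (q j) (x.1 j) (y.1 j) ∧
    ∀ k, k ≠ i → k ≠ j → x.1 k = y.1 k

/-- The Diestel-Leader graph `DL(q₁,…,q_d)`. -/
def DLGraph (d : ℕ) (q : Fin d → ℕ) : SimpleGraph (DLVert d q) where
  Adj := DLAdj d q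
  symm := by
    constructor
    rintro x y ⟨i, j, hij, hi, hj, hk⟩
    exact ⟨i, j, hij, Or.symm hi, Or.symm hj, fun k h1 h2 => (hk k h1 h2).symm⟩
  loopless := by
    constructor
    rintro x ⟨i, j, hij, hi, _, _⟩
    rcases hi with ⟨h, _⟩ | ⟨h, _⟩ <;> omega

/-- The generating set `S = {(b·δ₀, 1) : b ∈ ℤ/qℤ} ∪ {(b·δ₀, 1)⁻¹ : b ∈ ℤ/qℤ}`
of the lamplighter group. -/
noncomputable def lampGen (q : ℕ) : Set (Lamp q) :=
  {g | ∃ b : ZMod q,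
    g = (⟨Multiplicative.ofAdd (Finsupp.single 0 b), Multiplicative.ofAdd 1⟩ : Lamp q) ∨
    g = (⟨Multiplicative.ofAdd (Finsupp.single 0 b), Multiplicative.ofAdd 1⟩ : Lamp q)⁻¹}

/-!
An element `(f, n)` of the lamplighter group (lamp configuration `f`, lamplighter at `n`) is
sent to the pair of tree vertices formed by the lamps below `n`, at level `n` in the first tree,
and the lamps at or above `n`, reflected by `k ↦ -k - 1`, at level `-n` in the second tree.
Right multiplication by `(b δ₀, 1)` changes the lamp at `n` and moves the lamplighter to `n + 1`;
on the image it moves the first coordinate up and the second one down along a tree edge, and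
these are exactly the edges of `DL(q, q)`.
-/

open Multiplicative SemidirectProduct Finsupp

variable {q : ℕ}

lemma lampAct_ofAdd_single (r : Multiplicative ℤ) (a : ℤ) (b : ZMod q) :
    lampAct q r (ofAdd (single a b)) = ofAdd (single (a + toAdd r) b) := by
  simp [lampAct, lampShift, equivMapDomain_single]

noncomputable def lampGenerator (q : ℕ) (b : ZMod q) : Lamp q :=
  ⟨ofAdd (single 0 b), ofAdd 1⟩

lemma mem_lampGen_iff {g : Lamp q} :
    g ∈ lampGen q ↔ ∃ b, g = lampGenerator q b ∨ g = (lampGenerator q b)⁻¹ :=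
  Iff.rfl

lemma mul_lampGenerator (x : Lamp q) (b : ZMod q) :
    x * lampGenerator q b = ⟨x.left * ofAdd (single (toAdd x.right) b), x.right * ofAdd 1⟩ := by
  refine SemidirectProduct.ext ?_ rfl
  rw [mul_left, lampGenerator, lampAct_ofAdd_single, zero_add]

lemma inr_mem_closure_lampGen (r : Multiplicative ℤ) :
    (inr r : Lamp q) ∈ Subgroup.closure (lampGen q) := by
  have ht : (inr (ofAdd 1) : Lamp q) ∈ Subgroup.closure (lampGen q) :=
    Subgroup.subset_closure ⟨0, Or.inl (by simp [mk_eq_inl_mul_inr])⟩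
  simpa [← map_zpow, ← ofAdd_zsmul] using zpow_mem ht (toAdd r)

lemma inl_single_mem_closure_lampGen (a : ℤ) (b : ZMod q) :
    (inl (ofAdd (single a b)) : Lamp q) ∈ Subgroup.closure (lampGen q) := by
  have h0 : (inl (ofAdd (single 0 b)) : Lamp q) = lampGenerator q b * (inr (ofAdd 1))⁻¹ := by
    rw [lampGenerator, mk_eq_inl_mul_inr, mul_inv_cancel_right]
  have hmem : (inl (ofAdd (single 0 b)) : Lamp q) ∈ Subgroup.closure (lampGen q) := by
    rw [h0]
    exact mul_mem (Subgroup.subset_closure ⟨b, Or.inl rfl⟩) (inv_mem (inr_mem_closure_lampGen _))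
  rw [← zero_add a, ← toAdd_ofAdd a, ← lampAct_ofAdd_single, inl_aut]
  exact mul_mem (mul_mem (inr_mem_closure_lampGen _) hmem) (inr_mem_closure_lampGen _)

lemma closure_lampGen : Subgroup.closure (lampGen q) = ⊤ := by
  have hinl (f : LampBase q) : (inl (ofAdd f) : Lamp q) ∈ Subgroup.closure (lampGen q) := by
    induction f using Finsupp.induction with
    | zero => exact one_mem _
    | single_add a b f _ _ ih =>
      rw [ofAdd_add, map_mul]
      exact mul_mem (inl_single_mem_closure_lampGen a b) ih
  rw [Subgroup.eq_top_iff']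
  intro x
  rw [← inl_left_mul_inr_right x]
  exact mul_mem (hinl (toAdd x.left)) (inr_mem_closure_lampGen _)

def IsLampStep (x y : Lamp q) : Prop :=
  toAdd y.right = toAdd x.right + 1 ∧ ∀ k ≠ toAdd x.right, toAdd x.left k = toAdd y.left k

lemma IsLampStep.ne {x y : Lamp q} (h : IsLampStep x y) : x ≠ y := by
  rintro rfl
  exact absurd h.1 (by omega)

lemma exists_eq_mul_lampGenerator_iff (x y : Lamp q) :
    (∃ b, y = x * lampGenerator q b) ↔ IsLampStep x y := by
  constructor
  · rintro ⟨b, rfl⟩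
    rw [mul_lampGenerator]
    refine ⟨rfl, fun k hk => ?_⟩
    simp [Ne.symm hk]
  · rintro ⟨hright, hleft⟩
    refine ⟨toAdd y.left (toAdd x.right) - toAdd x.left (toAdd x.right), ?_⟩
    rw [mul_lampGenerator]
    refine SemidirectProduct.ext (toAdd.injective (Finsupp.ext fun k => ?_))
      (toAdd.injective hright)
    by_cases hk : k = toAdd x.right
    · simp [hk]
    · simp [Ne.symm hk, hleft k hk]

lemma inv_mul_mem_lampGen_iff (x y : Lamp q) :
    x⁻¹ * y ∈ lampGen q ↔ IsLampStep x y ∨ IsLampStep y x := by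
  have hinv (b : ZMod q) : x⁻¹ * y = (lampGenerator q b)⁻¹ ↔ x = y * lampGenerator q b := by
    rw [← inv_eq_iff_eq_inv, mul_inv_rev, inv_inv, inv_mul_eq_iff_eq_mul]
  simp only [mem_lampGen_iff, exists_or, inv_mul_eq_iff_eq_mul, hinv,
    exists_eq_mul_lampGenerator_iff]

lemma cayley_lampGen_adj_iff (x y : Lamp q) :
    (SimpleGraph.fromRel fun x y : Lamp q => x⁻¹ * y ∈ lampGen q).Adj x y ↔
      IsLampStep x y ∨ IsLampStep y x := by
  rw [SimpleGraph.fromRel_adj, inv_mul_mem_lampGen_iff, inv_mul_mem_lampGen_iff,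
    or_comm (a := IsLampStep y x), or_self]
  exact and_iff_right_of_imp fun h => h.elim IsLampStep.ne fun h => h.ne.symm

namespace TreeVert

lemma ext {u v : TreeVert q} (hf : u.f = v.f) (hlvl : u.lvl = v.lvl) : u = v := by
  cases u
  cases v
  cases hf
  cases hlvl
  rfl

noncomputable def toFinsupp (u : TreeVert q) : ℤ →₀ ZMod q :=
  Finsupp.ofSupportFinite u.f u.finsupp

@[simp] lemma toFinsupp_apply (u : TreeVert q) (k : ℤ) : u.toFinsupp k = u.f k := rfl

noncomputable def trunc (f : ℤ →₀ ZMod q) (n : ℤ) : TreeVert q where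
  f k := if k < n then f k else 0
  lvl := n
  finsupp := Set.Finite.subset f.hasFiniteSupport fun k hk => by
    by_contra h
    exact hk (by simp [show f k = 0 by simpa using h])
  eventually_zero _ hk := if_neg (not_lt.mpr hk)

@[simp] lemma trunc_f (f : ℤ →₀ ZMod q) (n k : ℤ) :
    (trunc f n).f k = if k < n then f k else 0 := rfl

@[simp] lemma trunc_lvl (f : ℤ →₀ ZMod q) (n : ℤ) : (trunc f n).lvl = n := rfl

lemma trunc_eq_of_eq_on_lt {f : ℤ →₀ ZMod q} {u : TreeVert q} (h : ∀ k < u.lvl, f k = u.f k) :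
    trunc f u.lvl = u :=
  ext (funext fun k => by
    by_cases hk : k < u.lvl
    · simp [hk, h k hk]
    · simp [hk, u.eventually_zero k (not_lt.mp hk)]) rfl

lemma treeAdj_trunc_iff (f g : ℤ →₀ ZMod q) (n m : ℤ) :
    treeAdj q (trunc f n) (trunc g m) ↔
      (m = n + 1 ∧ ∀ k < n, f k = g k) ∨ (n = m + 1 ∧ ∀ k < m, g k = f k) := by
  simp only [treeAdj, trunc_f, trunc_lvl]
  refine or_congr (and_congr_right fun h => forall₂_congr fun k hk => ?_)
    (and_congr_right fun h => forall₂_congr fun k hk => ?_) <;>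
  rw [if_pos hk, if_pos (by omega)]

end TreeVert

noncomputable def Finsupp.reflect {M : Type*} [Zero M] (f : ℤ →₀ M) : ℤ →₀ M :=
  f.comapDomain (fun k => -k - 1) (fun a _ b _ h => by simpa using h)

@[simp] lemma Finsupp.reflect_apply {M : Type*} [Zero M] (f : ℤ →₀ M) (k : ℤ) :
    reflect f k = f (-k - 1) := rfl

lemma DLVert.lvl_one_eq_neg {p : Fin 2 → ℕ} (x : DLVert 2 p) : (x.1 1).lvl = -(x.1 0).lvl := by
  have := x.2
  rw [Fin.sum_univ_two] at this
  omega

noncomputable def lampEquivDL (q : ℕ) : Lamp q ≃ DLVert 2 (fun _ => q) where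
  toFun x := ⟨![TreeVert.trunc (toAdd x.left) (toAdd x.right),
      TreeVert.trunc (reflect (toAdd x.left)) (-toAdd x.right)], by simp [Fin.sum_univ_two]⟩
  invFun x := ⟨ofAdd ((x.1 0).toFinsupp + reflect (x.1 1).toFinsupp), ofAdd (x.1 0).lvl⟩
  left_inv x := by
    refine SemidirectProduct.ext (toAdd.injective (Finsupp.ext fun k => ?_)) rfl
    by_cases hk : k < toAdd x.right
    · simp [hk, show ¬ -k - 1 < -toAdd x.right by omega]
    · simp [hk, show -k - 1 < -toAdd x.right by omega]
  right_inv x := by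
    have hlvl := x.lvl_one_eq_neg
    refine Subtype.ext (funext fun i => ?_)
    fin_cases i
    · refine TreeVert.trunc_eq_of_eq_on_lt fun k hk => ?_
      simp [(x.1 1).eventually_zero (-k - 1) (by omega)]
    · simp only [Fin.mk_one, Matrix.cons_val_one, Matrix.cons_val_zero, toAdd_ofAdd, ← hlvl]
      refine TreeVert.trunc_eq_of_eq_on_lt fun k hk => ?_
      simp [(x.1 0).eventually_zero (-k - 1) (by omega)]

@[simp] lemma lampEquivDL_apply_zero (x : Lamp q) :
    (lampEquivDL q x).1 0 = TreeVert.trunc (toAdd x.left) (toAdd x.right) := rfl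

@[simp] lemma lampEquivDL_apply_one (x : Lamp q) :
    (lampEquivDL q x).1 1 = TreeVert.trunc (reflect (toAdd x.left)) (-toAdd x.right) := rfl

lemma dlAdj_two_iff {p : Fin 2 → ℕ} (x y : DLVert 2 p) :
    DLAdj 2 p x y ↔ treeAdj (p 0) (x.1 0) (y.1 0) ∧ treeAdj (p 1) (x.1 1) (y.1 1) := by
  constructor
  · rintro ⟨i, j, hij, hi, hj, -⟩
    fin_cases i <;> fin_cases j
    exacts [absurd rfl hij, ⟨hi, hj⟩, ⟨hj, hi⟩, absurd rfl hij]
  · rintro ⟨h0, h1⟩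
    exact ⟨0, 1, zero_ne_one, h0, h1, fun k hk0 hk1 => by fin_cases k <;> simp_all⟩

lemma forall_ne_iff_forall_lt_and_forall_lt_neg {P : ℤ → Prop} {n : ℤ} :
    (∀ k ≠ n, P k) ↔ (∀ k < n, P k) ∧ ∀ k < -(n + 1), P (-k - 1) := by
  refine ⟨fun h => ⟨fun k hk => h k (by omega), fun k hk => h _ (by omega)⟩,
    fun ⟨hlt, hgt⟩ k hk => ?_⟩
  rcases lt_or_gt_of_ne hk with hk | hk
  · exact hlt k hk
  · simpa using hgt (-k - 1) (by omega)

lemma dlAdj_lampEquivDL_iff (x y : Lamp q) :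
    DLAdj 2 (fun _ => q) (lampEquivDL q x) (lampEquivDL q y) ↔
      IsLampStep x y ∨ IsLampStep y x := by
  rw [dlAdj_two_iff, lampEquivDL_apply_zero, lampEquivDL_apply_zero, lampEquivDL_apply_one,
    lampEquivDL_apply_one, TreeVert.treeAdj_trunc_iff, TreeVert.treeAdj_trunc_iff]
  simp only [reflect_apply, IsLampStep, forall_ne_iff_forall_lt_and_forall_lt_neg]
  constructor
  · rintro ⟨⟨hm, hlt⟩ | ⟨hn, hlt⟩, ⟨hm', hgt⟩ | ⟨hn', hgt⟩⟩
    · omega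
    · exact Or.inl ⟨hm, hlt, fun k hk => (hgt k (by omega)).symm⟩
    · exact Or.inr ⟨hn, hlt, fun k hk => (hgt k (by omega)).symm⟩
    · omega
  · rintro (⟨hm, hlt, hgt⟩ | ⟨hn, hlt, hgt⟩)
    · exact ⟨Or.inl ⟨hm, hlt⟩, Or.inr ⟨by omega, fun k hk => (hgt k (by omega)).symm⟩⟩
    · exact ⟨Or.inr ⟨hn, hlt⟩, Or.inl ⟨by omega, fun k hk => (hgt k (by omega)).symm⟩⟩

theorem DL2_is_cayley_of_lamplighter_general (q : ℕ) :
    Subgroup.closure (lampGen q) = ⊤ ∧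
    Nonempty ((SimpleGraph.fromRel fun x y : Lamp q => x⁻¹ * y ∈ lampGen q) ≃g
      DLGraph 2 (fun _ => q)) :=
  ⟨closure_lampGen, ⟨⟨lampEquivDL q, fun {x y} =>
    (dlAdj_lampEquivDL_iff x y).trans (cayley_lampGen_adj_iff x y).symm⟩⟩⟩

/-- `DL(q,q)` is isomorphic to the Cayley graph of the lamplighter group
`(⊕_ℤ ℤ/qℤ) ⋊ ℤ` with respect to the symmetric generating set
`S = {(b·δ₀, 1) : b} ∪ {(b·δ₀, 1)⁻¹ : b}`. -/
theorem DL2_is_cayley_of_lamplighter (q : ℕ) (hq : 2 ≤ q) :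
    Subgroup.closure (lampGen q) = ⊤ ∧
    Nonempty ((SimpleGraph.fromRel fun x y : Lamp q => x⁻¹ * y ∈ lampGen q) ≃g
      DLGraph 2 (fun _ => q)) :=
  DL2_is_cayley_of_lamplighter_general q
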